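/- Let Y be a pointed metric space and G a Banach space. Every MS-Lipschitz p-summing operator T : Y → G is strictly Lipschitz p-summing. -/

import Mathlib

/-
The identity of `G` is `1`-Lipschitz and fixes `0`, so by the universal property of the free
space it linearizes to a map `β : F(G) → G` of norm at most one with `β ∘ δ = id`. Precomposing
with `β` turns each `h ∈ G*` into a functional on `F(G)` that agrees with `h` along `δ`; as this
transpose is a contraction it can only decrease the Chevet–Saphar norm `d_p`, so the
MS-inequality for the functionals `h ∘ β` is the required strict inequality for the `h`.
-/

open scoped TensorProduct
open NormedSpace Finset

noncomputable section

/-- The strong `ℓ_p^m` norm of a finite family in a normed space. -/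
def strongLp {E : Type*} [NormedAddCommGroup E] (p : ℝ) {m : ℕ} (x : Fin m → E) : ℝ :=
  (∑ j, ‖x j‖ ^ p) ^ (1 / p)

/-- The weak `ℓ_p^{m,w}` norm of a finite family in a normed space. -/
def weakLp {E : Type*} [NormedAddCommGroup E] [NormedSpace ℝ E] (p : ℝ) {m : ℕ}
    (x : Fin m → E) : ℝ :=
  sSup {r : ℝ | ∃ φ : StrongDual ℝ E, ‖φ‖ ≤ 1 ∧ r = (∑ j, |φ (x j)| ^ p) ^ (1 / p)}

/-- A continuous linear operator is `p`-summing. -/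
def IsPSumming {E F : Type*} [NormedAddCommGroup E] [NormedSpace ℝ E]
    [NormedAddCommGroup F] [NormedSpace ℝ F] (p : ℝ) (u : E →L[ℝ] F) : Prop :=
  ∃ K > 0, ∀ (m : ℕ) (x : Fin m → E),
    strongLp p (fun j => u (x j)) ≤ K * weakLp p x

/-- A continuous linear operator is (Cohen) strongly `p`-summing (`q` is the conjugate of `p`). -/
def IsStronglyPSumming {E F : Type*} [NormedAddCommGroup E] [NormedSpace ℝ E]
    [NormedAddCommGroup F] [NormedSpace ℝ F] (p q : ℝ) (u : E →L[ℝ] F) : Prop :=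
  ∃ K > 0, ∀ (m : ℕ) (x : Fin m → E) (φ : Fin m → StrongDual ℝ F),
    ∑ j, |φ j (u (x j))| ≤ K * strongLp p x * weakLp q φ

/-- A continuous linear operator is (Cohen) `p`-nuclear (`q` is the conjugate of `p`). -/
def IsPNuclear {E F : Type*} [NormedAddCommGroup E] [NormedSpace ℝ E]
    [NormedAddCommGroup F] [NormedSpace ℝ F] (p q : ℝ) (u : E →L[ℝ] F) : Prop :=
  ∃ K > 0, ∀ (m : ℕ) (x : Fin m → E) (φ : Fin m → StrongDual ℝ F),
    ∑ j, |φ j (u (x j))| ≤ K * weakLp p x * weakLp q φ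

/-- The Chevet–Saphar norm `d_p` on a tensor product (`q` is the conjugate of `p`):
infimum over all finite representations of `z`. -/
def dpNorm {E G : Type*} [NormedAddCommGroup E] [NormedSpace ℝ E]
    [NormedAddCommGroup G] [NormedSpace ℝ G] (p q : ℝ) (z : TensorProduct ℝ E G) : ℝ :=
  sInf {r : ℝ | ∃ (m : ℕ) (n : Fin m → E) (h : Fin m → G),
    z = ∑ j, n j ⊗ₜ[ℝ] h j ∧ r = weakLp p n * strongLp q h}

/-- The Chevet–Saphar norm `g_p` on a tensor product (`q` is the conjugate of `p`). -/
def gpNorm {E G : Type*} [NormedAddCommGroup E] [NormedSpace ℝ E]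
    [NormedAddCommGroup G] [NormedSpace ℝ G] (p q : ℝ) (z : TensorProduct ℝ E G) : ℝ :=
  sInf {r : ℝ | ∃ (m : ℕ) (n : Fin m → E) (h : Fin m → G),
    z = ∑ j, n j ⊗ₜ[ℝ] h j ∧ r = strongLp p n * weakLp q h}

/-- The tensor norm `w_p` (`q` is the conjugate of `p`). -/
def wpNorm {E G : Type*} [NormedAddCommGroup E] [NormedSpace ℝ E]
    [NormedAddCommGroup G] [NormedSpace ℝ G] (p q : ℝ) (z : TensorProduct ℝ E G) : ℝ :=
  sInf {r : ℝ | ∃ (m : ℕ) (n : Fin m → E) (h : Fin m → G),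
    z = ∑ j, n j ⊗ₜ[ℝ] h j ∧ r = weakLp p n * weakLp q h}

/-- `E`, together with the map `δ : Y → E`, is (isometrically) the Lipschitz-free space
of the pointed metric space `(Y, y₀)`: `δ` sends the base point to `0`, is an isometric
embedding, has dense linear span, and the norm of finite combinations of point evaluations
is computed against the unit ball of `Lip₀(Y)`. -/
structure IsFreeSpace (Y : Type*) [MetricSpace Y] (y₀ : Y)
    (E : Type*) [NormedAddCommGroup E] [NormedSpace ℝ E] [CompleteSpace E]
    (δ : Y → E) : Prop where
  map_base : δ y₀ = 0
  isometry : ∀ x y : Y, ‖δ x - δ y‖ = dist x y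
  dense_span : (Submodule.span ℝ (Set.range δ)).topologicalClosure = ⊤
  norm_eq : ∀ (n : ℕ) (a : Fin n → ℝ) (x : Fin n → Y),
    ‖∑ i, a i • δ (x i)‖ =
      sSup {r : ℝ | ∃ s : Y → ℝ, LipschitzWith 1 s ∧ s y₀ = 0 ∧ r = |∑ i, a i * s (x i)|}

end

noncomputable section

variable {Y W FY FW : Type*} [MetricSpace Y] [MetricSpace W]
  [NormedAddCommGroup FY] [NormedSpace ℝ FY] [NormedAddCommGroup FW] [NormedSpace ℝ FW]

/-- `T : Y → W` is MS-Lipschitz `p`-summing (`q` is the conjugate of `p`), the free spaces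
of `Y` and `W` being realized as `FY`, `FW` via `δY`, `δW`.  Elements of `W^# = F(W)^*` are
encoded as elements of `Dual ℝ FW`, and `d_p^L` is the Chevet–Saphar norm computed in
`F(Y) ⊗ W^#`. -/
def MSLipPSumming (p q : ℝ) (δY : Y → FY) (δW : W → FW) (T : Y → W) : Prop :=
  ∃ K > 0, ∀ (k : ℕ) (x y : Fin k → Y) (f : Fin k → StrongDual ℝ FW),
    |∑ l, (f l (δW (T (x l))) - f l (δW (T (y l))))| ≤
      K * dpNorm p q (∑ l, (δY (x l) - δY (y l)) ⊗ₜ[ℝ] f l)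

/-- `T : Y → W` is MS-strongly Lipschitz `p`-summing (`q` is the conjugate of `p`). -/
def MSStronglyLipPSumming (p q : ℝ) (δY : Y → FY) (δW : W → FW) (T : Y → W) : Prop :=
  ∃ K > 0, ∀ (k : ℕ) (x y : Fin k → Y) (f : Fin k → StrongDual ℝ FW),
    |∑ l, (f l (δW (T (x l))) - f l (δW (T (y l))))| ≤
      K * gpNorm p q (∑ l, (δY (x l) - δY (y l)) ⊗ₜ[ℝ] f l)

/-- `T : Y → W` is MS-Lipschitz `p`-nuclear (`q` is the conjugate of `p`). -/
def MSLipPNuclear (p q : ℝ) (δY : Y → FY) (δW : W → FW) (T : Y → W) : Prop :=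
  ∃ K > 0, ∀ (k : ℕ) (x y : Fin k → Y) (f : Fin k → StrongDual ℝ FW),
    |∑ l, (f l (δW (T (x l))) - f l (δW (T (y l))))| ≤
      K * wpNorm p q (∑ l, (δY (x l) - δY (y l)) ⊗ₜ[ℝ] f l)

end

section LpNorms

variable {E F : Type*} [NormedAddCommGroup E] [NormedAddCommGroup F]

theorem strongLp_nonneg (p : ℝ) {m : ℕ} (x : Fin m → E) : 0 ≤ strongLp p x := by
  unfold strongLp
  positivity

theorem strongLp_le_strongLp {p : ℝ} (hp : 0 ≤ p) {m : ℕ} {x : Fin m → E} {y : Fin m → F}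
    (h : ∀ j, ‖x j‖ ≤ ‖y j‖) : strongLp p x ≤ strongLp p y := by
  unfold strongLp
  gcongr with j
  exact h j

theorem weakLp_nonneg [NormedSpace ℝ E] (p : ℝ) {m : ℕ} (x : Fin m → E) : 0 ≤ weakLp p x := by
  unfold weakLp
  refine Real.sSup_nonneg ?_
  rintro r ⟨φ, -, rfl⟩
  positivity

end LpNorms

theorem dpNorm_lTensor_le {E G H : Type*} [NormedAddCommGroup E] [NormedSpace ℝ E]
    [NormedAddCommGroup G] [NormedSpace ℝ G] [NormedAddCommGroup H] [NormedSpace ℝ H]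
    (p : ℝ) {q : ℝ} (hq : 0 ≤ q) (L : G →ₗ[ℝ] H) (hL : ∀ g, ‖L g‖ ≤ ‖g‖)
    (z : TensorProduct ℝ E G) : dpNorm p q (L.lTensor E z) ≤ dpNorm p q z := by
  obtain ⟨m, n, h, hz⟩ := TensorProduct.exists_sum_tmul_eq z
  refine le_csInf ⟨_, m, n, h, hz, rfl⟩ ?_
  rintro _ ⟨m, n, h, rfl, rfl⟩
  have hrep : L.lTensor E (∑ j, n j ⊗ₜ[ℝ] h j) = ∑ j, n j ⊗ₜ[ℝ] L (h j) := by
    simp only [map_sum, LinearMap.lTensor_tmul]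
  calc dpNorm p q (L.lTensor E (∑ j, n j ⊗ₜ[ℝ] h j))
      ≤ weakLp p n * strongLp q (fun j => L (h j)) := by
        refine csInf_le ⟨0, ?_⟩ ⟨m, n, fun j => L (h j), hrep, rfl⟩
        rintro _ ⟨_, _, _, -, rfl⟩
        exact mul_nonneg (weakLp_nonneg _ _) (strongLp_nonneg _ _)
    _ ≤ weakLp p n * strongLp q h :=
        mul_le_mul_of_nonneg_left (strongLp_le_strongLp hq fun j => hL (h j)) (weakLp_nonneg _ _)

theorem Finsupp.linearCombination_eq_sum_fin {α R M : Type*} [Semiring R] [AddCommMonoid M]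
    [Module R M] (v : α → M) (c : α →₀ R) :
    Finsupp.linearCombination R v c =
      ∑ i : Fin c.support.card, c (c.support.equivFin.symm i) • v (c.support.equivFin.symm i) := by
  rw [Finsupp.linearCombination_apply, Finsupp.sum, ← Finset.sum_coe_sort,
    ← c.support.equivFin.symm.sum_comp]

namespace IsFreeSpace

variable {Y E F : Type*} [MetricSpace Y] {y₀ : Y}
  [NormedAddCommGroup E] [NormedSpace ℝ E] [CompleteSpace E] {δ : Y → E}
  [NormedAddCommGroup F] [NormedSpace ℝ F]

theorem abs_sum_mul_le_norm (hE : IsFreeSpace Y y₀ E δ) {s : Y → ℝ} (hs : LipschitzWith 1 s)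
    (hs0 : s y₀ = 0) {n : ℕ} (a : Fin n → ℝ) (x : Fin n → Y) :
    |∑ i, a i * s (x i)| ≤ ‖∑ i, a i • δ (x i)‖ := by
  rw [hE.norm_eq]
  refine le_csSup ⟨∑ i, |a i| * dist (x i) y₀, ?_⟩ ⟨s, hs, hs0, rfl⟩
  rintro _ ⟨t, ht, ht0, rfl⟩
  refine (Finset.abs_sum_le_sum_abs _ _).trans (Finset.sum_le_sum fun i _ => ?_)
  rw [abs_mul]
  gcongr
  simpa [ht0, Real.dist_eq] using ht.dist_le_mul (x i) y₀

theorem abs_sum_mul_le_mul_norm (hE : IsFreeSpace Y y₀ E δ) {s : Y → ℝ} {K : NNReal}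
    (hs : LipschitzWith K s) (hs0 : s y₀ = 0) {n : ℕ} (a : Fin n → ℝ) (x : Fin n → Y) :
    |∑ i, a i * s (x i)| ≤ K * ‖∑ i, a i • δ (x i)‖ := by
  rcases eq_or_ne K 0 with rfl | hK
  · have hs_zero : ∀ y, s y = 0 := fun y => by
      simpa [hs0] using hs.dist_le_mul y y₀
    simp [hs_zero]
  have hscaled : LipschitzWith 1 (fun y => (K : ℝ)⁻¹ * s y) :=
    LipschitzWith.of_dist_le_mul fun y z => by
      rw [Real.dist_eq, ← mul_sub, abs_mul, abs_inv, NNReal.abs_eq, NNReal.coe_one, one_mul,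
        inv_mul_le_iff₀ (by positivity), ← Real.dist_eq]
      exact hs.dist_le_mul y z
  have hbound := hE.abs_sum_mul_le_norm hscaled (by simp [hs0]) a x
  simp only [mul_left_comm _ (K : ℝ)⁻¹, ← Finset.mul_sum, abs_mul, abs_inv,
    NNReal.abs_eq] at hbound
  rwa [inv_mul_le_iff₀ (by positivity)] at hbound

theorem norm_sum_smul_le (hE : IsFreeSpace Y y₀ E δ) {f : Y → F} {L : NNReal}
    (hf : LipschitzWith L f) (hf0 : f y₀ = 0) {n : ℕ} (a : Fin n → ℝ) (x : Fin n → Y) :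
    ‖∑ i, a i • f (x i)‖ ≤ L * ‖∑ i, a i • δ (x i)‖ := by
  obtain ⟨φ, hφ, hφv⟩ := exists_dual_vector'' ℝ (∑ i, a i • f (x i))
  have hφf : LipschitzWith L (φ ∘ f) :=
    (φ.lipschitz.comp hf).weaken (mul_le_of_le_one_left zero_le (by exact_mod_cast hφ))
  calc ‖∑ i, a i • f (x i)‖ = ∑ i, a i * φ (f (x i)) := by
        simpa [map_sum] using hφv.symm
    _ ≤ |∑ i, a i * (φ ∘ f) (x i)| := le_abs_self _
    _ ≤ L * ‖∑ i, a i • δ (x i)‖ := hE.abs_sum_mul_le_mul_norm hφf (by simp [hf0]) a x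

theorem norm_linearCombination_le (hE : IsFreeSpace Y y₀ E δ) {f : Y → F} {L : NNReal}
    (hf : LipschitzWith L f) (hf0 : f y₀ = 0) (c : Y →₀ ℝ) :
    ‖Finsupp.linearCombination ℝ f c‖ ≤ L * ‖Finsupp.linearCombination ℝ δ c‖ := by
  simp only [Finsupp.linearCombination_eq_sum_fin]
  exact hE.norm_sum_smul_le hf hf0 _ _

theorem exists_lift (hE : IsFreeSpace Y y₀ E δ) [CompleteSpace F] {f : Y → F} {L : NNReal}
    (hf : LipschitzWith L f) (hf0 : f y₀ = 0) :
    ∃ β : E →L[ℝ] F, (∀ y, β (δ y) = f y) ∧ ‖β‖ ≤ L := by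
  have hdense : DenseRange (Finsupp.linearCombination ℝ δ) := by
    rw [DenseRange, ← LinearMap.coe_range, Finsupp.range_linearCombination]
    exact Submodule.dense_iff_topologicalClosure_eq_top.mpr hE.dense_span
  have hbound := hE.norm_linearCombination_le hf hf0
  refine ⟨(Finsupp.linearCombination ℝ f).extendOfNorm (Finsupp.linearCombination ℝ δ),
    fun y => ?_, LinearMap.opNorm_extendOfNorm_le hdense L.coe_nonneg hbound⟩
  simpa using LinearMap.extendOfNorm_eq hdense ⟨L, hbound⟩ (Finsupp.single y 1)

end IsFreeSpace

theorem msLipPSumming_implies_strictlyLipPSumming_general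
    {Y G FY FG : Type*} [MetricSpace Y]
    [NormedAddCommGroup G] [NormedSpace ℝ G] [CompleteSpace G]
    [NormedAddCommGroup FY] [NormedSpace ℝ FY]
    [NormedAddCommGroup FG] [NormedSpace ℝ FG] [CompleteSpace FG]
    {δY : Y → FY} {δG : G → FG}
    (hFG : IsFreeSpace G 0 FG δG)
    {p q : ℝ} (hpq : p.HolderConjugate q)
    (T : Y → G)
    (hMS : MSLipPSumming p q δY δG T) :
    ∃ K > 0, ∀ (k : ℕ) (x y : Fin k → Y) (h : Fin k → StrongDual ℝ G),
      |∑ l, (h l (T (x l)) - h l (T (y l)))| ≤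
        K * dpNorm p q (∑ l, (δY (x l) - δY (y l)) ⊗ₜ[ℝ] h l) := by
  obtain ⟨β, hβδ, hβ⟩ := hFG.exists_lift LipschitzWith.id rfl
  set L := (ContinuousLinearMap.compL ℝ FG G ℝ).flip β
  have hL : ∀ f, ‖L f‖ ≤ ‖f‖ := fun f =>
    (f.opNorm_comp_le β).trans (mul_le_of_le_one_right (norm_nonneg f) (by simpa using hβ))
  obtain ⟨K, hK, hMS⟩ := hMS
  refine ⟨K, hK, fun k x y h => ?_⟩
  calc |∑ l, (h l (T (x l)) - h l (T (y l)))|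
      = |∑ l, (L (h l) (δG (T (x l))) - L (h l) (δG (T (y l))))| := by simp [L, hβδ]
    _ ≤ K * dpNorm p q (∑ l, (δY (x l) - δY (y l)) ⊗ₜ[ℝ] L (h l)) := hMS k x y _
    _ = K * dpNorm p q
          ((L : StrongDual ℝ G →ₗ[ℝ] StrongDual ℝ FG).lTensor FY
            (∑ l, (δY (x l) - δY (y l)) ⊗ₜ[ℝ] h l)) := by
        simp only [map_sum, LinearMap.lTensor_tmul, ContinuousLinearMap.coe_coe]
    _ ≤ K * dpNorm p q (∑ l, (δY (x l) - δY (y l)) ⊗ₜ[ℝ] h l) := by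
        gcongr
        exact dpNorm_lTensor_le p hpq.symm.nonneg _ hL _

/-- Proposition 2.3: every MS-Lipschitz `p`-summing operator from a pointed
metric space `Y` into a Banach space `G` is strictly Lipschitz `p`-summing. -/
theorem msLipPSumming_implies_strictlyLipPSumming
    {Y G FY FG : Type*} [MetricSpace Y] [Inhabited Y]
    [NormedAddCommGroup G] [NormedSpace ℝ G] [CompleteSpace G]
    [NormedAddCommGroup FY] [NormedSpace ℝ FY] [CompleteSpace FY]
    [NormedAddCommGroup FG] [NormedSpace ℝ FG] [CompleteSpace FG]
    {δY : Y → FY} {δG : G → FG}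
    (hFY : IsFreeSpace Y default FY δY) (hFG : IsFreeSpace G 0 FG δG)
    {p q : ℝ} (hpq : p.HolderConjugate q)
    (T : Y → G) (hTlip : ∃ K, LipschitzWith K T) (hT0 : T default = 0)
    (hMS : MSLipPSumming p q δY δG T) :
    ∃ K > 0, ∀ (k : ℕ) (x y : Fin k → Y) (h : Fin k → StrongDual ℝ G),
      |∑ l, (h l (T (x l)) - h l (T (y l)))| ≤
        K * dpNorm p q (∑ l, (δY (x l) - δY (y l)) ⊗ₜ[ℝ] h l) :=
  msLipPSumming_implies_strictlyLipPSumming_general hFG hpq T hMS
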